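/- Let u ∈ H¹(𝕋) and set w = e^{−iJ(u)} u where J(u)(x) = (1/2π)∫₀^{2π}∫_θ^x (|u(y)|² − (1/2π)‖u‖²_{L²}) dy dθ, and m = (1/2π)‖u‖²_{L²(𝕋)}. Then the Hamiltonian transforms as Im ∫_𝕋 u ∂ₓ(conj u) dx + ½ ∫_𝕋 |u|⁴ dx = Im ∫_𝕋 w ∂ₓ(conj w) dx − ½ ∫_𝕋 |w|⁴ dx + 2π m². -/

import Mathlib

open MeasureTheory intervalIntegral

/-- m = (1/2π) ‖u‖²_{L²(𝕋)}. -/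
noncomputable def mass (u : ℝ → ℂ) : ℝ :=
  (1 / (2 * Real.pi)) * ∫ x in (0:ℝ)..(2 * Real.pi), ‖u x‖ ^ 2

/-- The gauge phase J(u)(x) = (1/2π)∫₀^{2π}∫_θ^x (|u(y)|² − (1/2π)‖u‖²_{L²}) dy dθ. -/
noncomputable def gaugeJ (u : ℝ → ℂ) (x : ℝ) : ℝ :=
  (1 / (2 * Real.pi)) *
    ∫ θ in (0:ℝ)..(2 * Real.pi), ∫ y in θ..x, (‖u y‖ ^ 2 - mass u)

/-- The gauge transform w = e^{−iJ(u)} u. -/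
noncomputable def gaugeW (u : ℝ → ℂ) (x : ℝ) : ℂ :=
  Complex.exp (-Complex.I * gaugeJ u x) * u x

/-- transformation of the Hamiltonian under the gauge:
Im ∫ u ∂ₓ(conj u) + ½∫|u|⁴ = Im ∫ w ∂ₓ(conj w) − ½∫|w|⁴ + 2πm². -/
theorem hamiltonian_gauge_identity (u : ℝ → ℂ) (hu : ContDiff ℝ 1 u)
    (hper : Function.Periodic u (2 * Real.pi)) :
    (∫ x in (0:ℝ)..(2 * Real.pi), u x * (starRingEnd ℂ) (deriv u x)).im
        + (1 / 2) * ∫ x in (0:ℝ)..(2 * Real.pi), ‖u x‖ ^ 4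
      = (∫ x in (0:ℝ)..(2 * Real.pi), gaugeW u x * (starRingEnd ℂ) (deriv (gaugeW u) x)).im
        - (1 / 2) * (∫ x in (0:ℝ)..(2 * Real.pi), ‖gaugeW u x‖ ^ 4)
        + 2 * Real.pi * (mass u) ^ 2 := by
  have hpi : (2 * Real.pi) ≠ 0 := by positivity
  set m := mass u with hm
  set g : ℝ → ℝ := fun y => ‖u y‖ ^ 2 - m with hg_def
  have hucont : Continuous u := hu.continuous
  have hg : Continuous g := (hucont.norm.pow 2).sub continuous_const
  set G : ℝ → ℝ := fun x => ∫ y in (0:ℝ)..x, g y with hG_def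
  have hGderiv : ∀ x, HasDerivAt G (g x) x := fun x =>
    intervalIntegral.integral_hasDerivAt_right (hg.intervalIntegrable _ _)
      (hg.stronglyMeasurableAtFilter _ _) hg.continuousAt
  have hGcont : Continuous G :=
    continuous_iff_continuousAt.2 fun x => (hGderiv x).continuousAt
  -- rewrite gaugeJ
  have hJ_eq : ∀ x, gaugeJ u x
      = G x - (1 / (2 * Real.pi)) * ∫ θ in (0:ℝ)..(2 * Real.pi), G θ := by
    intro x
    have h1 : ∀ θ : ℝ, (∫ y in θ..x, (‖u y‖ ^ 2 - mass u)) = G x - G θ := by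
      intro θ
      rw [← intervalIntegral.integral_interval_sub_left (hg.intervalIntegrable 0 x)
          (hg.intervalIntegrable 0 θ)]
    unfold gaugeJ
    rw [intervalIntegral.integral_congr (fun θ _ => h1 θ),
      intervalIntegral.integral_sub (intervalIntegrable_const)
        (hGcont.intervalIntegrable _ _), intervalIntegral.integral_const]
    field_simp
    ring
  have hJderiv : ∀ x, HasDerivAt (gaugeJ u) (g x) x := by
    intro x
    have : HasDerivAt (fun x => G x - (1 / (2 * Real.pi)) *
        ∫ θ in (0:ℝ)..(2 * Real.pi), G θ) (g x) x := (hGderiv x).sub_const _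
    exact this.congr_of_eventuallyEq (Filter.Eventually.of_forall hJ_eq)
  -- derivative of w
  have hu' : ∀ x, HasDerivAt u (deriv u x) x := fun x =>
    (hu.differentiable one_ne_zero x).hasDerivAt
  have hWderiv : ∀ x, HasDerivAt (gaugeW u)
      (Complex.exp (-Complex.I * gaugeJ u x) *
        (deriv u x + (-Complex.I * g x) * u x)) x := by
    intro x
    have h1 : HasDerivAt (fun y => ((gaugeJ u y : ℝ) : ℂ)) ((g x : ℂ)) x :=
      (hJderiv x).ofReal_comp
    have h2 : HasDerivAt (fun y => -Complex.I * (gaugeJ u y : ℂ))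
        (-Complex.I * (g x : ℂ)) x := h1.const_mul _
    have h3 : HasDerivAt (fun y => Complex.exp (-Complex.I * (gaugeJ u y : ℂ)))
        (Complex.exp (-Complex.I * (gaugeJ u x : ℂ)) * (-Complex.I * (g x : ℂ))) x :=
      h2.cexp
    have h4 := h3.mul (hu' x)
    have : HasDerivAt (gaugeW u)
        (Complex.exp (-Complex.I * gaugeJ u x) * (-Complex.I * g x) * u x +
          Complex.exp (-Complex.I * gaugeJ u x) * deriv u x) x := h4
    convert this using 1
    ring
  -- pointwise identity
  have key : ∀ x, gaugeW u x * (starRingEnd ℂ) (deriv (gaugeW u) x)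
      = u x * (starRingEnd ℂ) (deriv u x)
        + Complex.I * ((g x * ‖u x‖ ^ 2 : ℝ) : ℂ) := by
    intro x
    rw [(hWderiv x).deriv]
    have hconjE : (starRingEnd ℂ) (Complex.exp (-Complex.I * gaugeJ u x))
        = Complex.exp (Complex.I * gaugeJ u x) := by
      rw [← Complex.exp_conj]
      simp [map_mul, Complex.conj_ofReal]
    have hEE : Complex.exp (-Complex.I * gaugeJ u x) *
        Complex.exp (Complex.I * gaugeJ u x) = 1 := by
      rw [← Complex.exp_add]
      ring_nf
      exact Complex.exp_zero
    have huu : u x * (starRingEnd ℂ) (u x) = ((‖u x‖ ^ 2 : ℝ) : ℂ) := by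
      rw [Complex.mul_conj']
      push_cast
      ring
    simp only [gaugeW, map_mul, map_add, map_neg, Complex.conj_I, Complex.conj_ofReal]
    push_cast
    calc Complex.exp (-Complex.I * gaugeJ u x) * u x *
          ((starRingEnd ℂ) (Complex.exp (-Complex.I * gaugeJ u x)) *
            ((starRingEnd ℂ) (deriv u x) +
              - -Complex.I * (g x : ℂ) * (starRingEnd ℂ) (u x)))
        = (Complex.exp (-Complex.I * gaugeJ u x) *
            Complex.exp (Complex.I * gaugeJ u x)) *
          (u x * (starRingEnd ℂ) (deriv u x)
            + Complex.I * (g x : ℂ) * (u x * (starRingEnd ℂ) (u x))) := by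
          rw [hconjE]; ring
      _ = u x * (starRingEnd ℂ) (deriv u x) + Complex.I * ((g x : ℝ) : ℂ) * ((‖u x‖ ^ 2 : ℝ) : ℂ) := by
          rw [hEE, huu]; ring
      _ = u x * (starRingEnd ℂ) (deriv u x) + Complex.I * ((g x : ℂ) * (‖u x‖ : ℂ) ^ 2) := by
          push_cast; ring
  -- integrate
  have hcont_uu' : Continuous fun x => u x * (starRingEnd ℂ) (deriv u x) :=
    hucont.mul (Complex.continuous_conj.comp (hu.continuous_deriv le_rfl))
  have hcont_g2 : Continuous fun x => Complex.I * ((g x * ‖u x‖ ^ 2 : ℝ) : ℂ) := by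
    fun_prop
  have hIeq : (∫ x in (0:ℝ)..(2 * Real.pi), gaugeW u x * (starRingEnd ℂ) (deriv (gaugeW u) x))
      = (∫ x in (0:ℝ)..(2 * Real.pi), u x * (starRingEnd ℂ) (deriv u x))
        + Complex.I * ((∫ x in (0:ℝ)..(2 * Real.pi), g x * ‖u x‖ ^ 2 : ℝ) : ℂ) := by
    rw [intervalIntegral.integral_congr (fun x _ => key x),
      intervalIntegral.integral_add (hcont_uu'.intervalIntegrable _ _)
        (hcont_g2.intervalIntegrable _ _),
      intervalIntegral.integral_const_mul, intervalIntegral.integral_ofReal]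
  have hnormw : ∀ x, ‖gaugeW u x‖ = ‖u x‖ := by
    intro x
    unfold gaugeW
    rw [norm_mul, Complex.norm_exp]
    simp
  have hA : (∫ x in (0:ℝ)..(2 * Real.pi), g x * ‖u x‖ ^ 2)
      = (∫ x in (0:ℝ)..(2 * Real.pi), ‖u x‖ ^ 4) - 2 * Real.pi * m ^ 2 := by
    have h1 : ∀ x, g x * ‖u x‖ ^ 2 = ‖u x‖ ^ 4 - m * ‖u x‖ ^ 2 := by
      intro x; simp only [hg_def]; ring
    rw [intervalIntegral.integral_congr (fun x _ => h1 x),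
      intervalIntegral.integral_sub (f := fun x => ‖u x‖ ^ 4) (g := fun x => m * ‖u x‖ ^ 2)
          ((hucont.norm.pow 4).intervalIntegrable _ _)
        ((continuous_const.mul (hucont.norm.pow 2)).intervalIntegrable _ _),
      intervalIntegral.integral_const_mul]
    have hS : (∫ x in (0:ℝ)..(2 * Real.pi), ‖u x‖ ^ 2) = 2 * Real.pi * m := by
      rw [hm]; unfold mass; field_simp
    rw [hS]; ring
  have hw4 : (∫ x in (0:ℝ)..(2 * Real.pi), ‖gaugeW u x‖ ^ 4)
      = ∫ x in (0:ℝ)..(2 * Real.pi), ‖u x‖ ^ 4 :=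
    intervalIntegral.integral_congr (fun x _ => by rw [hnormw x])
  rw [hIeq, hw4]
  simp only [Complex.add_im, Complex.mul_im, Complex.I_re, Complex.I_im,
    Complex.ofReal_re, Complex.ofReal_im]
  rw [hA]
  ring
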